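/- (Theorem 1, discounted version.) Suppose the transition kernel is independent of actions and the reward depends only on the current state and action. Then for every discount factor γ with 0 ≤ γ < 1 and every initial state s, the supremum over all stationary stochastic policies π of the discounted value V^γ_π(s) equals Σ_{t=1}^{∞} γ^{t−1} · Σ_{s' ∈ S} P^{t−1}(s, s') · max_{a ∈ A} r(s', a), and this supremum is attained by any deterministic greedy policy assigning to each state the point mass at an action maximizing the single-step reward r(s', ·). -/

import Mathlib

/-!
Since the kernel ignores actions, the law of the state at time `t` is the row `Pn P t s` for
every policy; a policy only changes the expected one-step reward collected in each state. That
reward is at most `max_a r s' a`, with equality for a greedy policy, so comparing the two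
absolutely convergent discounted series term by term bounds every value by the greedy one.
-/

open Finset Classical

noncomputable section

/-- `Pn P t s s'` is the `t`-step transition probability of the (policy-independent)
state chain with one-step kernel `P`. -/
noncomputable def Pn {S : Type*} [Fintype S] (P : S → S → ℝ) : ℕ → S → S → ℝ
  | 0 => fun s s' => if s = s' then 1 else 0
  | (t + 1) => fun s s' => ∑ u, Pn P t s u * P u s'

/-- The `γ`-discounted value of a stationary stochastic policy `π` from state `s`,
under an action-independent transition kernel `P` and reward `r`. -/
noncomputable def Vdisc {S A : Type*} [Fintype S] [Fintype A]
    (P : S → S → ℝ) (r : S → A → ℝ) (γ : ℝ) (π : S → PMF A) (s : S) : ℝ :=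
  ∑' t : ℕ, γ ^ t * ∑ s', Pn P t s s' * (∑ a, ((π s') a).toReal * r s' a)

namespace Pn

variable {S : Type*} [Fintype S] {P : S → S → ℝ}

lemma nonneg (hP0 : ∀ s s', 0 ≤ P s s') (t : ℕ) (s s' : S) : 0 ≤ Pn P t s s' := by
  induction t generalizing s' with
  | zero => unfold Pn; split_ifs <;> norm_num
  | succ t ih => exact sum_nonneg fun u _ => mul_nonneg (ih u) (hP0 u s')

lemma sum_eq_one (hP1 : ∀ s, ∑ s', P s s' = 1) (t : ℕ) (s : S) : ∑ s', Pn P t s s' = 1 := by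
  induction t with
  | zero => simp [Pn]
  | succ t ih =>
    calc ∑ s', Pn P (t + 1) s s' = ∑ u, Pn P t s u * ∑ s', P u s' := by
          simp only [Pn, mul_sum]; exact sum_comm
      _ = 1 := by simp only [hP1, mul_one, ih]

lemma le_one (hP0 : ∀ s s', 0 ≤ P s s') (hP1 : ∀ s, ∑ s', P s s' = 1) (t : ℕ) (s s' : S) :
    Pn P t s s' ≤ 1 :=
  sum_eq_one hP1 t s ▸
    single_le_sum (fun u _ => nonneg hP0 t s u) (mem_univ s')

end Pn

def discountedReturn {S : Type*} [Fintype S] (P : S → S → ℝ) (γ : ℝ) (c : S → ℝ) (s : S) : ℝ :=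
  ∑' t : ℕ, γ ^ t * ∑ s', Pn P t s s' * c s'

section discountedReturn

variable {S : Type*} [Fintype S] {P : S → S → ℝ} {γ : ℝ}

lemma summable_discountedReturn (hP0 : ∀ s s', 0 ≤ P s s') (hP1 : ∀ s, ∑ s', P s s' = 1)
    (hγ0 : 0 ≤ γ) (hγ1 : γ < 1) (c : S → ℝ) (s : S) :
    Summable fun t : ℕ => γ ^ t * ∑ s', Pn P t s s' * c s' := by
  refine ((summable_geometric_of_lt_one hγ0 hγ1).mul_right (∑ s', |c s'|)).of_norm_bounded
    fun t => ?_
  rw [norm_mul, norm_pow, Real.norm_of_nonneg hγ0]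
  gcongr
  calc ‖∑ s', Pn P t s s' * c s'‖ ≤ ∑ s', ‖Pn P t s s' * c s'‖ := norm_sum_le _ _
    _ ≤ ∑ s', |c s'| := by
      gcongr with s'
      rw [norm_mul, Real.norm_of_nonneg (Pn.nonneg hP0 t s s'), Real.norm_eq_abs]
      exact mul_le_of_le_one_left (abs_nonneg _) (Pn.le_one hP0 hP1 t s s')

lemma discountedReturn_mono (hP0 : ∀ s s', 0 ≤ P s s') (hP1 : ∀ s, ∑ s', P s s' = 1)
    (hγ0 : 0 ≤ γ) (hγ1 : γ < 1) {c c' : S → ℝ} (hc : ∀ s, c s ≤ c' s) (s : S) :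
    discountedReturn P γ c s ≤ discountedReturn P γ c' s := by
  unfold discountedReturn
  refine Summable.tsum_le_tsum (fun t => ?_) (summable_discountedReturn hP0 hP1 hγ0 hγ1 c s)
    (summable_discountedReturn hP0 hP1 hγ0 hγ1 c' s)
  gcongr with s'
  · exact Pn.nonneg hP0 t s s'
  · exact hc s'

end discountedReturn

lemma PMF.sum_toReal_eq_one {A : Type*} [Fintype A] (p : PMF A) : ∑ a, (p a).toReal = 1 := by
  rw [← ENNReal.toReal_sum fun a _ => p.apply_ne_top a, ← tsum_fintype (L := .unconditional _), p.tsum_coe,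
    ENNReal.toReal_one]

lemma PMF.sum_toReal_mul_le_sup' {A : Type*} [Fintype A] [Nonempty A] (p : PMF A)
    (f : A → ℝ) : ∑ a, (p a).toReal * f a ≤ univ.sup' univ_nonempty f :=
  calc ∑ a, (p a).toReal * f a ≤ ∑ a, (p a).toReal * univ.sup' univ_nonempty f := by
        gcongr with a
        exact le_sup' f (mem_univ a)
    _ = univ.sup' univ_nonempty f := by rw [← sum_mul, p.sum_toReal_eq_one, one_mul]

lemma PMF.sum_pure_toReal_mul {A : Type*} [Fintype A] (a : A) (f : A → ℝ) :
    ∑ a', ((PMF.pure a : PMF A) a').toReal * f a' = f a := by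
  simp [PMF.pure_apply, apply_ite ENNReal.toReal, ite_mul]

lemma sup'_univ_eq_of_forall_le {A : Type*} [Fintype A] [Nonempty A] {f : A → ℝ} {a : A}
    (ha : ∀ a', f a' ≤ f a) : univ.sup' univ_nonempty f = f a :=
  le_antisymm (sup'_le _ _ fun a' _ => ha a') (le_sup' f (mem_univ a))

section Vdisc

variable {S A : Type*} [Fintype S] [Fintype A] {P : S → S → ℝ} {r : S → A → ℝ} {γ : ℝ}

lemma Vdisc_eq_discountedReturn (π : S → PMF A) (s : S) :
    Vdisc P r γ π s = discountedReturn P γ (fun s' => ∑ a, ((π s') a).toReal * r s' a) s :=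
  rfl

variable [Nonempty A]

lemma Vdisc_le_discountedReturn_sup' (hP0 : ∀ s s', 0 ≤ P s s')
    (hP1 : ∀ s, ∑ s', P s s' = 1) (hγ0 : 0 ≤ γ) (hγ1 : γ < 1) (π : S → PMF A) (s : S) :
    Vdisc P r γ π s ≤ discountedReturn P γ (fun s' => univ.sup' univ_nonempty (r s')) s :=
  discountedReturn_mono hP0 hP1 hγ0 hγ1 (fun s' => (π s').sum_toReal_mul_le_sup' (r s')) s

lemma Vdisc_eq_discountedReturn_sup'_of_greedy {π : S → PMF A}
    (hπ : ∀ s', ∃ a, (∀ a', r s' a' ≤ r s' a) ∧ π s' = PMF.pure a) (s : S) :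
    Vdisc P r γ π s = discountedReturn P γ (fun s' => univ.sup' univ_nonempty (r s')) s := by
  rw [Vdisc_eq_discountedReturn]
  congr 1
  funext s'
  obtain ⟨a, ha, hpure⟩ := hπ s'
  rw [hpure, PMF.sum_pure_toReal_mul, sup'_univ_eq_of_forall_le ha]

end Vdisc

theorem discounted_value_sup_eq_greedy_general {S A : Type*} [Fintype S] [Fintype A]
    [Nonempty A]
    (P : S → S → ℝ) (hP0 : ∀ s s', 0 ≤ P s s') (hP1 : ∀ s, ∑ s', P s s' = 1)
    (r : S → A → ℝ)
    (γ : ℝ) (hγ0 : 0 ≤ γ) (hγ1 : γ < 1) (s : S) :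
    (⨆ π : S → PMF A, Vdisc P r γ π s)
      = (∑' t : ℕ, γ ^ t * ∑ s', Pn P t s s' *
          Finset.univ.sup' Finset.univ_nonempty (r s')) ∧
    ∀ πstar : S → PMF A,
      (∀ s' : S, ∃ a : A, (∀ a', r s' a' ≤ r s' a) ∧ πstar s' = PMF.pure a) →
      Vdisc P r γ πstar s = ∑' t : ℕ, γ ^ t * ∑ s', Pn P t s s' *
          Finset.univ.sup' Finset.univ_nonempty (r s') := by
  let T := discountedReturn P γ (fun s' => univ.sup' univ_nonempty (r s')) s
  change _ = T ∧ ∀ πstar, _ → _ = T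
  choose g hg using fun s' => Finite.exists_max (r s')
  have greedy_mem : T ∈ Set.range fun π => Vdisc P r γ π s :=
    ⟨fun s' => PMF.pure (g s'),
      Vdisc_eq_discountedReturn_sup'_of_greedy (fun s' => ⟨g s', hg s', rfl⟩) s⟩
  have le_T : ∀ π, Vdisc P r γ π s ≤ T := fun π =>
    Vdisc_le_discountedReturn_sup' hP0 hP1 hγ0 hγ1 π s
  exact ⟨IsGreatest.csSup_eq ⟨greedy_mem, Set.forall_mem_range.2 le_T⟩,
    fun _ hπ => Vdisc_eq_discountedReturn_sup'_of_greedy hπ s⟩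

/-- Theorem 1, discounted version: with an action-independent transition
kernel and rewards depending only on the current state and action, the supremum of the
discounted value over all stationary stochastic policies equals the discounted sum of
expected maximal one-step rewards, and it is attained by any deterministic greedy policy. -/
theorem discounted_value_sup_eq_greedy {S A : Type*} [Fintype S] [Fintype A]
    [Nonempty S] [Nonempty A]
    (P : S → S → ℝ) (hP0 : ∀ s s', 0 ≤ P s s') (hP1 : ∀ s, ∑ s', P s s' = 1)
    (r : S → A → ℝ)
    (γ : ℝ) (hγ0 : 0 ≤ γ) (hγ1 : γ < 1) (s : S) :
    (⨆ π : S → PMF A, Vdisc P r γ π s)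
      = (∑' t : ℕ, γ ^ t * ∑ s', Pn P t s s' *
          Finset.univ.sup' Finset.univ_nonempty (r s')) ∧
    ∀ πstar : S → PMF A,
      (∀ s' : S, ∃ a : A, (∀ a', r s' a' ≤ r s' a) ∧ πstar s' = PMF.pure a) →
      Vdisc P r γ πstar s = ∑' t : ℕ, γ ^ t * ∑ s', Pn P t s s' *
          Finset.univ.sup' Finset.univ_nonempty (r s') :=
  discounted_value_sup_eq_greedy_general P hP0 hP1 r γ hγ0 hγ1 s

end
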